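/- Let d ≥ 2 and let V be the swap operator on H = EuclideanSpace ℂ (Fin d × Fin d), defined by (V v)(i, j) = v(j, i), and set L = 2 • id − V. Then: (i) for all unit vectors a, b ∈ EuclideanSpace ℂ (Fin d), ⟨a⊗b, L (a⊗b)⟩ = 2 − |⟨a, b⟩|²; (ii) the supremum of ⟨a⊗b, L (a⊗b)⟩ over unit vectors a, b equals 2 (i.e., g_max(L) = 2); and (iii) a pair of unit vectors (a, b) attains this supremum if and only if ⟨a, b⟩ = 0. -/

import Mathlib

/-!
The swap operator exchanges the factors of a product vector, so
`⟪a ⊗ b, V (a ⊗ b)⟫ = ⟪a, b⟫ ⟪b, a⟫ = ‖⟪a, b⟫‖²`, and for unit vectors the expectation of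
`L = 2 • id - V` is `2 - ‖⟪a, b⟫‖² ≤ 2`. Equality holds exactly when `a ⊥ b`, and orthonormal
pairs exist as soon as `d ≥ 2`, so the supremum is attained and equals `2`.
-/

open scoped ComplexInnerProductSpace

/-- The product vector `a ⊗ b` in the bipartite space, `(a ⊗ b)(i, j) = a i * b j`. -/
noncomputable def tp {m n : ℕ} (a : EuclideanSpace ℂ (Fin m)) (b : EuclideanSpace ℂ (Fin n)) :
    EuclideanSpace ℂ (Fin m × Fin n) :=
  WithLp.toLp 2 (fun p : Fin m × Fin n => a p.1 * b p.2)

lemma inner_tp_tp {m n : ℕ} (a c : EuclideanSpace ℂ (Fin m)) (b e : EuclideanSpace ℂ (Fin n)) :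
    ⟪tp a b, tp c e⟫ = ⟪a, c⟫ * ⟪b, e⟫ := by
  simp only [PiLp.inner_apply, RCLike.inner_apply, tp]
  rw [Fintype.sum_prod_type, Finset.sum_mul_sum]
  refine Finset.sum_congr rfl fun i _ => Finset.sum_congr rfl fun j _ => ?_
  simp only [map_mul]
  ring

section Swap

variable {d : ℕ} {V : EuclideanSpace ℂ (Fin d × Fin d) →L[ℂ] EuclideanSpace ℂ (Fin d × Fin d)}

lemma swap_tp (hV : ∀ (v : EuclideanSpace ℂ (Fin d × Fin d)) (p : Fin d × Fin d),
      V v p = v (p.2, p.1)) (a b : EuclideanSpace ℂ (Fin d)) :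
    V (tp a b) = tp b a := by
  ext p
  simp only [hV, tp, PiLp.toLp_apply]
  ring

lemma inner_tp_swap_tp (hV : ∀ (v : EuclideanSpace ℂ (Fin d × Fin d)) (p : Fin d × Fin d),
      V v p = v (p.2, p.1)) (a b : EuclideanSpace ℂ (Fin d)) :
    ⟪tp a b, V (tp a b)⟫ = ((‖⟪a, b⟫‖ ^ 2 : ℝ) : ℂ) := by
  rw [swap_tp hV, inner_tp_tp, ← inner_conj_symm b a, Complex.mul_conj', Complex.ofReal_pow]

lemma inner_tp_two_smul_id_sub_swap_tp (hV : ∀ (v : EuclideanSpace ℂ (Fin d × Fin d))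
      (p : Fin d × Fin d), V v p = v (p.2, p.1)) (a b : EuclideanSpace ℂ (Fin d)) :
    ⟪tp a b, ((2 : ℂ) • ContinuousLinearMap.id ℂ (EuclideanSpace ℂ (Fin d × Fin d)) - V) (tp a b)⟫ =
      ((2 * ‖a‖ ^ 2 * ‖b‖ ^ 2 - ‖⟪a, b⟫‖ ^ 2 : ℝ) : ℂ) := by
  rw [sub_apply, smul_apply, ContinuousLinearMap.id_apply, inner_sub_right, inner_smul_right,
    inner_tp_swap_tp hV, inner_tp_tp, inner_self_eq_norm_sq_to_K, inner_self_eq_norm_sq_to_K]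
  push_cast [← RCLike.ofReal_eq_complex_ofReal]
  ring

end Swap

lemma exists_orthonormal_pair {d : ℕ} (hd : 2 ≤ d) :
    ∃ a b : EuclideanSpace ℂ (Fin d), ‖a‖ = 1 ∧ ‖b‖ = 1 ∧ ⟪a, b⟫ = 0 := by
  refine ⟨EuclideanSpace.single ⟨0, by omega⟩ 1, EuclideanSpace.single ⟨1, by omega⟩ 1,
    by simp, by simp, ?_⟩
  simp [EuclideanSpace.inner_single_left, Fin.ext_iff]

/-- **Swap-operator example.**  Let `V` be the swap operator on
`EuclideanSpace ℂ (Fin d × Fin d)` and `L = 2•id − V`.  Then (i) for all unit vectors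
`a, b`, `⟨a⊗b, L (a⊗b)⟩ = 2 − |⟨a, b⟩|²`; (ii) the supremum of this expectation value
over unit vectors equals `2` (i.e. `g_max(L) = 2`); and (iii) a pair of unit vectors
attains the supremum iff `⟨a, b⟩ = 0`. -/
theorem swap_operator_gmax {d : ℕ} (hd : 2 ≤ d)
    (V : EuclideanSpace ℂ (Fin d × Fin d) →L[ℂ] EuclideanSpace ℂ (Fin d × Fin d))
    (hV : ∀ (v : EuclideanSpace ℂ (Fin d × Fin d)) (p : Fin d × Fin d), V v p = v (p.2, p.1))
    (L : EuclideanSpace ℂ (Fin d × Fin d) →L[ℂ] EuclideanSpace ℂ (Fin d × Fin d))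
    (hL : L = (2 : ℂ) • ContinuousLinearMap.id ℂ (EuclideanSpace ℂ (Fin d × Fin d)) - V) :
    (∀ a b : EuclideanSpace ℂ (Fin d), ‖a‖ = 1 → ‖b‖ = 1 →
      ⟪tp a b, L (tp a b)⟫ = ((2 - ‖⟪a, b⟫‖ ^ 2 : ℝ) : ℂ)) ∧
    sSup {r : ℝ | ∃ a b : EuclideanSpace ℂ (Fin d),
        ‖a‖ = 1 ∧ ‖b‖ = 1 ∧ r = (⟪tp a b, L (tp a b)⟫).re} = 2 ∧
    (∀ a b : EuclideanSpace ℂ (Fin d), ‖a‖ = 1 → ‖b‖ = 1 →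
      ((⟪tp a b, L (tp a b)⟫).re = 2 ↔ ⟪a, b⟫ = 0)) := by
  have expectation : ∀ a b : EuclideanSpace ℂ (Fin d), ‖a‖ = 1 → ‖b‖ = 1 →
      ⟪tp a b, L (tp a b)⟫ = ((2 - ‖⟪a, b⟫‖ ^ 2 : ℝ) : ℂ) :=
    fun a b ha hb => by rw [hL, inner_tp_two_smul_id_sub_swap_tp hV, ha, hb]; norm_num
  have expectation_re : ∀ a b : EuclideanSpace ℂ (Fin d), ‖a‖ = 1 → ‖b‖ = 1 →
      (⟪tp a b, L (tp a b)⟫).re = 2 - ‖⟪a, b⟫‖ ^ 2 :=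
    fun a b ha hb => by rw [expectation a b ha hb, Complex.ofReal_re]
  refine ⟨expectation, IsGreatest.csSup_eq ⟨?_, ?_⟩, fun a b ha hb => ?_⟩
  · obtain ⟨a, b, ha, hb, hab⟩ := exists_orthonormal_pair hd
    exact ⟨a, b, ha, hb, by simp [expectation_re a b ha hb, hab]⟩
  · rintro r ⟨a, b, ha, hb, rfl⟩
    rw [expectation_re a b ha hb]
    linarith [sq_nonneg ‖⟪a, b⟫‖]
  · rw [expectation_re a b ha hb, sub_eq_self, sq_eq_zero_iff, norm_eq_zero]
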